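/- arXiv:hep-th/0303062 — 2 statements merged into one kernel-verified Lean document; each statement's English description precedes it below -/
import Mathlib

section
/- The annihilation operator maps symmetrized vectors to symmetrized vectors: if ψ ∈ L²(ℝⁿ, ℂ) satisfies Pₙψ = ψ and φ ∈ L²(ℝ, ℂ), then the function a(φ)ψ ∈ L²(ℝ^{n−1}, ℂ) defined by (a(φ)ψ)(θ₁,…,θ_{n−1}) = √n·∫_ℝ φ(θ₀)·ψ(θ₀,θ₁,…,θ_{n−1}) dθ₀ satisfies P_{n−1}(a(φ)ψ) = a(φ)ψ. More generally, a(φ)∘(1⊗D_{n−1}(π)) = D_{n−1}(π)∘a(φ) for every π ∈ S_{n−1}, where (1⊗D_{n−1}(π)) acts as D_{n−1}(π) in the last n−1 variables of L²(ℝⁿ). -/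
open MeasureTheory Complex

noncomputable section

/-- The `n`-fold L² space over rapidity variables. -/
abbrev Hsp (n : ℕ) : Type := Lp ℂ 2 (volume : Measure (Fin n → ℝ))

/-- The transposition τᵢ = (i, i+1) (0-based) in the symmetric group Sₙ. -/
def tau (n i : ℕ) (h : i + 1 < n) : Equiv.Perm (Fin n) :=
  Equiv.swap ⟨i, Nat.lt_of_succ_lt h⟩ ⟨i + 1, h⟩

/-- `D` is the S₂-twisted representation of Sₙ on L²(ℝⁿ) determined on the
transpositions τᵢ by `(D(τᵢ)ψ)(θ) = S₂(θ_{i+1} − θ_i)·ψ(θ ∘ τᵢ)`. -/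
def IsZamoRep (S₂ : ℝ → ℂ) (n : ℕ)
    (D : Equiv.Perm (Fin n) →* unitary (Hsp n →L[ℂ] Hsp n)) : Prop :=
  ∀ (i : ℕ) (hi : i + 1 < n) (ψ : Hsp n),
    ∀ᵐ θ ∂(volume : Measure (Fin n → ℝ)),
      ((D (tau n i hi) : Hsp n →L[ℂ] Hsp n) ψ) θ
        = S₂ (θ ⟨i + 1, hi⟩ - θ ⟨i, Nat.lt_of_succ_lt hi⟩)
            * ψ (fun m => θ (tau n i hi m))

/-- The symmetrization Pₙ = (1/n!)·Σ_{π ∈ Sₙ} Dₙ(π). -/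
def symProj {n : ℕ}
    (D : Equiv.Perm (Fin n) →* unitary (Hsp n →L[ℂ] Hsp n)) :
    Hsp n →L[ℂ] Hsp n :=
  (n.factorial : ℂ)⁻¹ • ∑ π : Equiv.Perm (Fin n), (D π : Hsp n →L[ℂ] Hsp n)

/-- The embedding Sₙ ↪ S_{n+1} fixing the first point, ρ ↦ 1 ⊗ ρ. -/
def embedSucc (n : ℕ) (ρ : Equiv.Perm (Fin n)) : Equiv.Perm (Fin (n + 1)) :=
  (finSuccEquiv n).trans ((Equiv.optionCongr ρ).trans (finSuccEquiv n).symm)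

/-!
For an adjacent transposition `τᵢ` of the last `n` variables, the twist factor
`S₂(θ_{i+2} − θ_{i+1})` does not involve the integration variable `θ₀`, so it comes out of the
integral and `a(φ) (D_{n+1}(1 ⊗ τᵢ) χ) = D_n(τᵢ) (a(φ) χ)`. The `τᵢ` generate `Sₙ` and
`π ↦ 1 ⊗ π` is multiplicative, so `a(φ)` intertwines `1 ⊗ D_n(π)` with `D_n(π)` for every `π`.
A vector fixed by `P_{n+1}` is fixed by every `D_{n+1}(σ)`, hence `a(φ) ψ` is fixed by every
`D_n(π)` and therefore by `P_n`. Square integrability of `a(φ) ψ` is Cauchy–Schwarz in `θ₀`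
followed by Fubini.
-/

theorem MeasureTheory.measurePreserving_comp_perm {ι α : Type*} [Fintype ι] [DecidableEq ι]
    [MeasureSpace α] [SigmaFinite (volume : Measure α)] (π : Equiv.Perm ι) :
    MeasurePreserving (fun θ : ι → α => θ ∘ π) volume volume := by
  convert volume_measurePreserving_piCongrLeft (fun _ : ι => α) π.symm using 1
  ext θ
  simp [MeasurableEquiv.coe_piCongrLeft, Equiv.piCongrLeft_apply_eq_cast]

theorem MeasureTheory.measurePreserving_finCons {α : Type*} [MeasureSpace α]
    [SigmaFinite (volume : Measure α)] (n : ℕ) :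
    MeasurePreserving (fun p : (Fin n → α) × α => (Fin.cons p.2 p.1 : Fin (n + 1) → α))
      ((volume : Measure (Fin n → α)).prod volume) volume := by
  have hcons : (fun p : (Fin n → α) × α => (Fin.cons p.2 p.1 : Fin (n + 1) → α)) =
      (MeasurableEquiv.piFinSuccAbove (fun _ : Fin (n + 1) => α) 0).symm ∘ Prod.swap := by
    funext p
    simp [MeasurableEquiv.piFinSuccAbove, Fin.insertNthEquiv, Fin.insertNth_zero']
  rw [hcons]
  exact (volume_preserving_piFinSuccAbove (fun _ : Fin (n + 1) => α) 0).symm.comp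
    Measure.measurePreserving_swap

theorem MeasureTheory.MemLp.integral_mul_prod {α β 𝕜 : Type*} [MeasurableSpace α]
    [MeasurableSpace β] [RCLike 𝕜] {μ : Measure α} {ν : Measure β} [SFinite μ] [SFinite ν]
    {φ : β → 𝕜} {F : α × β → 𝕜} (hφ : MemLp φ 2 ν) (hF : MemLp F 2 (μ.prod ν)) :
    MemLp (fun a => ∫ b, φ b * F (a, b) ∂ν) 2 μ := by
  have hFsq : Integrable (fun p => ‖F p‖ ^ 2) (μ.prod ν) :=
    (memLp_two_iff_integrable_sq_norm hF.1).1 hF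
  set H : α → ℝ := fun a => ∫ b, ‖F (a, b)‖ ^ 2 ∂ν
  set C : ℝ := ∫ b, ‖φ b‖ ^ 2 ∂ν
  have hH : Integrable H μ := hFsq.integral_prod_left
  have hbound : MemLp (fun a => √C * √(H a)) 2 μ := by
    refine (memLp_two_iff_integrable_sq
      ((Real.continuous_sqrt.comp_aestronglyMeasurable hH.1).const_mul _)).2 ?_
    have hsq : (fun a => (√C * √(H a)) ^ 2) = fun a => C * H a := by
      funext a
      rw [mul_pow, Real.sq_sqrt (integral_nonneg fun _ => by positivity),
        Real.sq_sqrt (integral_nonneg fun _ => by positivity)]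
    rw [hsq]
    exact hH.const_mul C
  refine hbound.of_le ((hφ.1.comp_snd.mul hF.1).integral_prod_right') ?_
  filter_upwards [hF.1.prodMk_left, hFsq.prod_right_ae] with a hFa hFa_sq
  have hFa2 : MemLp (fun b => F (a, b)) 2 ν := (memLp_two_iff_integrable_sq_norm hFa).2 hFa_sq
  have hHolder := integral_mul_norm_le_Lp_mul_Lq (p := 2) (q := 2)
    Real.HolderConjugate.two_two (by simpa using hφ) (by simpa using hFa2)
  simp only [Real.rpow_two, ← Real.sqrt_eq_rpow] at hHolder
  calc ‖∫ b, φ b * F (a, b) ∂ν‖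
      ≤ ∫ b, ‖φ b‖ * ‖F (a, b)‖ ∂ν := by
        simpa only [norm_mul] using norm_integral_le_integral_norm (fun b => φ b * F (a, b))
    _ ≤ √C * √(H a) := hHolder
    _ ≤ ‖√C * √(H a)‖ := le_abs_self _

def annihilationFun (n : ℕ) (φ : ℝ → ℂ) (u : (Fin (n + 1) → ℝ) → ℂ) : (Fin n → ℝ) → ℂ :=
  fun θ => (Real.sqrt (n + 1) : ℂ) * ∫ t : ℝ, φ t * u (Fin.cons t θ)

section Annihilation

variable {n : ℕ} {φ : ℝ → ℂ}

theorem memLp_annihilationFun {u : (Fin (n + 1) → ℝ) → ℂ} (hφ : MemLp φ 2 volume)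
    (hu : MemLp u 2 volume) : MemLp (annihilationFun n φ u) 2 volume :=
  (hφ.integral_mul_prod (hu.comp_measurePreserving (measurePreserving_finCons n))).const_mul _

theorem annihilationFun_congr_ae {u v : (Fin (n + 1) → ℝ) → ℂ} (h : u =ᵐ[volume] v) :
    annihilationFun n φ u =ᵐ[volume] annihilationFun n φ v := by
  have hslice : ∀ᵐ θ ∂(volume : Measure (Fin n → ℝ)), ∀ᵐ t ∂(volume : Measure ℝ),
      u (Fin.cons t θ) = v (Fin.cons t θ) :=
    Measure.ae_ae_of_ae_prod ((measurePreserving_finCons n).quasiMeasurePreserving.ae h)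
  filter_upwards [hslice] with θ hθ
  exact congrArg _ (integral_congr_ae (hθ.mono fun t ht => by simp only [ht]))

end Annihilation

def annihilation (n : ℕ) (φ : Lp ℂ 2 (volume : Measure ℝ)) (χ : Hsp (n + 1)) : Hsp n :=
  (memLp_annihilationFun (Lp.memLp φ) (Lp.memLp χ)).toLp _

theorem coeFn_annihilation (n : ℕ) (φ : Lp ℂ 2 (volume : Measure ℝ)) (χ : Hsp (n + 1)) :
    annihilation n φ χ =ᵐ[volume] annihilationFun n φ χ :=
  MemLp.coeFn_toLp _

@[simp]
theorem embedSucc_zero (n : ℕ) (ρ : Equiv.Perm (Fin n)) : embedSucc n ρ 0 = 0 := by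
  simp [embedSucc]

@[simp]
theorem embedSucc_succ (n : ℕ) (ρ : Equiv.Perm (Fin n)) (j : Fin n) :
    embedSucc n ρ j.succ = (ρ j).succ := by
  simp [embedSucc]

theorem embedSucc_one (n : ℕ) : embedSucc n 1 = 1 := by
  ext m
  cases m using Fin.cases <;> simp

theorem embedSucc_mul (n : ℕ) (σ ρ : Equiv.Perm (Fin n)) :
    embedSucc n (σ * ρ) = embedSucc n σ * embedSucc n ρ := by
  ext m
  cases m using Fin.cases <;> simp

theorem embedSucc_tau (n i : ℕ) (hi : i + 1 < n) :
    embedSucc n (tau n i hi) = tau (n + 1) (i + 1) (Nat.succ_lt_succ hi) := by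
  simp only [embedSucc, tau, Equiv.optionCongr_swap, ← Equiv.trans_assoc,
    Equiv.trans_swap_trans_symm, finSuccEquiv_symm_some]
  rfl

theorem finCons_comp_embedSucc {α : Type*} (n : ℕ) (ρ : Equiv.Perm (Fin n)) (t : α)
    (θ : Fin n → α) :
    (Fin.cons t θ : Fin (n + 1) → α) ∘ embedSucc n ρ = Fin.cons t (θ ∘ ρ) := by
  funext m
  cases m using Fin.cases <;> simp

theorem mclosure_tau (n : ℕ) :
    Submonoid.closure {σ : Equiv.Perm (Fin n) | ∃ i hi, tau n i hi = σ} = ⊤ := by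
  cases n with
  | zero => exact Subsingleton.elim _ _
  | succ m =>
    rw [← Equiv.Perm.mclosure_swap_castSucc_succ]
    congr 1
    ext σ
    constructor
    · rintro ⟨i, hi, rfl⟩
      exact ⟨⟨i, Nat.lt_of_succ_lt_succ hi⟩, rfl⟩
    · rintro ⟨i, rfl⟩
      exact ⟨i, Nat.succ_lt_succ i.isLt, rfl⟩

theorem annihilationFun_twistedSwap (S₂ : ℝ → ℂ) {n : ℕ} (φ : ℝ → ℂ)
    (u : (Fin (n + 1) → ℝ) → ℂ) (i : ℕ) (hi : i + 1 < n) (θ : Fin n → ℝ) :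
    annihilationFun n φ (fun θ' => S₂ (θ' ⟨i + 1 + 1, Nat.succ_lt_succ hi⟩
        - θ' ⟨i + 1, Nat.lt_of_succ_lt (Nat.succ_lt_succ hi)⟩)
          * u (fun m => θ' (tau (n + 1) (i + 1) (Nat.succ_lt_succ hi) m))) θ
      = S₂ (θ ⟨i + 1, hi⟩ - θ ⟨i, Nat.lt_of_succ_lt hi⟩)
          * annihilationFun n φ u (fun m => θ (tau n i hi m)) := by
  have hcons : ∀ t : ℝ, (fun m => (Fin.cons t θ : Fin (n + 1) → ℝ)
      (tau (n + 1) (i + 1) (Nat.succ_lt_succ hi) m)) = Fin.cons t (fun m => θ (tau n i hi m)) :=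
    fun t => by rw [← embedSucc_tau]; exact finCons_comp_embedSucc n _ t θ
  have hgap : ∀ t : ℝ, (Fin.cons t θ : Fin (n + 1) → ℝ) ⟨i + 1 + 1, Nat.succ_lt_succ hi⟩
      - (Fin.cons t θ : Fin (n + 1) → ℝ) ⟨i + 1, Nat.lt_of_succ_lt (Nat.succ_lt_succ hi)⟩
        = θ ⟨i + 1, hi⟩ - θ ⟨i, Nat.lt_of_succ_lt hi⟩ := fun _ => rfl
  simp only [annihilationFun, hcons, hgap, mul_left_comm (φ _) (S₂ _), integral_const_mul]
  exact mul_left_comm _ _ _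

section Intertwining

variable {S₂ : ℝ → ℂ} {n : ℕ}
  {D' : Equiv.Perm (Fin (n + 1)) →* unitary (Hsp (n + 1) →L[ℂ] Hsp (n + 1))}
  {D : Equiv.Perm (Fin n) →* unitary (Hsp n →L[ℂ] Hsp n)}

theorem annihilation_tau_succ (hD' : IsZamoRep S₂ (n + 1) D') (hD : IsZamoRep S₂ n D)
    (φ : Lp ℂ 2 (volume : Measure ℝ)) (i : ℕ) (hi : i + 1 < n) (χ : Hsp (n + 1)) :
    annihilation n φ
        ((D' (tau (n + 1) (i + 1) (Nat.succ_lt_succ hi)) : Hsp (n + 1) →L[ℂ] Hsp (n + 1)) χ)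
      = (D (tau n i hi) : Hsp n →L[ℂ] Hsp n) (annihilation n φ χ) := by
  have hcomp : (fun θ : Fin n → ℝ => annihilationFun n φ χ (fun m => θ (tau n i hi m)))
      =ᵐ[volume] fun θ => annihilation n φ χ (fun m => θ (tau n i hi m)) :=
    (measurePreserving_comp_perm (tau n i hi)).quasiMeasurePreserving.ae_eq
      (coeFn_annihilation n φ χ).symm
  refine Lp.ext ((coeFn_annihilation n φ _).trans ?_)
  filter_upwards [annihilationFun_congr_ae (hD' (i + 1) (Nat.succ_lt_succ hi) χ), hcomp,
    hD i hi (annihilation n φ χ)] with θ hθ' hθ hDθ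
  rw [hθ', annihilationFun_twistedSwap, hθ, hDθ]

theorem annihilation_embedSucc (hD' : IsZamoRep S₂ (n + 1) D') (hD : IsZamoRep S₂ n D)
    (φ : Lp ℂ 2 (volume : Measure ℝ)) (π : Equiv.Perm (Fin n)) (χ : Hsp (n + 1)) :
    annihilation n φ ((D' (embedSucc n π) : Hsp (n + 1) →L[ℂ] Hsp (n + 1)) χ)
      = (D π : Hsp n →L[ℂ] Hsp n) (annihilation n φ χ) := by
  have hπ : π ∈ Submonoid.closure {σ | ∃ i hi, tau n i hi = σ} := by
    rw [mclosure_tau]; trivial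
  induction hπ using Submonoid.closure_induction generalizing χ with
  | mem σ hσ =>
    obtain ⟨i, hi, rfl⟩ := hσ
    rw [embedSucc_tau]
    exact annihilation_tau_succ hD' hD φ i hi χ
  | one => simp [embedSucc_one]
  | mul σ ρ _ _ hσ hρ => simp [embedSucc_mul, hσ, hρ]

end Intertwining

section Symmetrization

variable {n : ℕ} (D : Equiv.Perm (Fin n) →* unitary (Hsp n →L[ℂ] Hsp n))

theorem mul_symProj (σ : Equiv.Perm (Fin n)) :
    (D σ : Hsp n →L[ℂ] Hsp n) * symProj D = symProj D := by
  rw [symProj, mul_smul_comm, Finset.mul_sum]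
  congr 1
  exact Fintype.sum_equiv (Equiv.mulLeft σ) _ _ fun π => by simp

theorem symProj_eq_self_iff (ψ : Hsp n) :
    symProj D ψ = ψ ↔ ∀ σ, (D σ : Hsp n →L[ℂ] Hsp n) ψ = ψ := by
  refine ⟨fun h σ => ?_, fun h => ?_⟩
  · conv_lhs => rw [← h, ← mul_apply_eq_comp, mul_symProj, h]
  simp only [symProj, smul_apply, sum_apply, h, Finset.sum_const, Finset.card_univ,
    Fintype.card_perm, Fintype.card_fin]
  rw [← Nat.cast_smul_eq_nsmul ℂ, smul_smul,
    inv_mul_cancel₀ (by exact_mod_cast n.factorial_ne_zero), one_smul]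

end Symmetrization

theorem statement4_general (S₂ : ℝ → ℂ)
    (n : ℕ)
    (D : ∀ m : ℕ, Equiv.Perm (Fin m) →* unitary (Hsp m →L[ℂ] Hsp m))
    (hD : ∀ m : ℕ, IsZamoRep S₂ m (D m))
    (φ : Lp ℂ 2 (volume : Measure ℝ)) :
    (∀ ψ : Hsp (n + 1), symProj (D (n + 1)) ψ = ψ →
      ∃ hg : MemLp
          (fun θ : Fin n → ℝ =>
            (Real.sqrt (n + 1) : ℂ) * ∫ t : ℝ, φ t * ψ (Fin.cons t θ)) 2
          (volume : Measure (Fin n → ℝ)),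
        symProj (D n) (hg.toLp _) = hg.toLp _) ∧
    (∀ (π : Equiv.Perm (Fin n)) (χ : Hsp (n + 1)),
      ∃ (h1 : MemLp
            (fun θ : Fin n → ℝ =>
              (Real.sqrt (n + 1) : ℂ) *
                ∫ t : ℝ, φ t *
                  (((D (n + 1)) (embedSucc n π) : Hsp (n + 1) →L[ℂ] Hsp (n + 1)) χ)
                    (Fin.cons t θ)) 2 (volume : Measure (Fin n → ℝ)))
        (h2 : MemLp
            (fun θ : Fin n → ℝ =>
              (Real.sqrt (n + 1) : ℂ) * ∫ t : ℝ, φ t * χ (Fin.cons t θ)) 2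
            (volume : Measure (Fin n → ℝ))),
        h1.toLp _ = ((D n) π : Hsp n →L[ℂ] Hsp n) (h2.toLp _)) := by
  have hcomm := annihilation_embedSucc (hD (n + 1)) (hD n) φ
  refine ⟨fun ψ hψ => ⟨memLp_annihilationFun (Lp.memLp φ) (Lp.memLp ψ), ?_⟩,
    fun π χ => ⟨memLp_annihilationFun (Lp.memLp φ) (Lp.memLp _),
      memLp_annihilationFun (Lp.memLp φ) (Lp.memLp χ), hcomm π χ⟩⟩
  show symProj (D n) (annihilation n φ ψ) = annihilation n φ ψ
  rw [symProj_eq_self_iff] at hψ ⊢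
  intro π
  exact (hcomm π ψ).symm.trans (congrArg _ (hψ (embedSucc n π)))

/-- The annihilation operator
`(a(φ)ψ)(θ₁,…,θₙ) = √(n+1)·∫ φ(θ₀)ψ(θ₀,θ₁,…,θₙ)dθ₀`  maps symmetrized vectors of
`L²(ℝ^{n+1})` to symmetrized vectors of `L²(ℝⁿ)`; more generally
`a(φ)∘(1⊗D_n(π)) = D_n(π)∘a(φ)` for every permutation π ∈ Sₙ. -/
theorem statement4 (S₂ : ℝ → ℂ) (hS₂meas : Measurable S₂)
    (hS₂abs : ∀ θ : ℝ, ‖S₂ θ‖ = 1)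
    (hS₂sym : ∀ θ : ℝ, S₂ (-θ) = starRingEnd ℂ (S₂ θ))
    (n : ℕ)
    (D : ∀ m : ℕ, Equiv.Perm (Fin m) →* unitary (Hsp m →L[ℂ] Hsp m))
    (hD : ∀ m : ℕ, IsZamoRep S₂ m (D m))
    (φ : Lp ℂ 2 (volume : Measure ℝ)) :
    (∀ ψ : Hsp (n + 1), symProj (D (n + 1)) ψ = ψ →
      ∃ hg : MemLp
          (fun θ : Fin n → ℝ =>
            (Real.sqrt (n + 1) : ℂ) * ∫ t : ℝ, φ t * ψ (Fin.cons t θ)) 2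
          (volume : Measure (Fin n → ℝ)),
        symProj (D n) (hg.toLp _) = hg.toLp _) ∧
    (∀ (π : Equiv.Perm (Fin n)) (χ : Hsp (n + 1)),
      ∃ (h1 : MemLp
            (fun θ : Fin n → ℝ =>
              (Real.sqrt (n + 1) : ℂ) *
                ∫ t : ℝ, φ t *
                  (((D (n + 1)) (embedSucc n π) : Hsp (n + 1) →L[ℂ] Hsp (n + 1)) χ)
                    (Fin.cons t θ)) 2 (volume : Measure (Fin n → ℝ)))
        (h2 : MemLp
            (fun θ : Fin n → ℝ =>
              (Real.sqrt (n + 1) : ℂ) * ∫ t : ℝ, φ t * χ (Fin.cons t θ)) 2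
            (volume : Measure (Fin n → ℝ))),
        h1.toLp _ = ((D n) π : Hsp n →L[ℂ] Hsp n) (h2.toLp _)) :=
  statement4_general S₂ n D hD φ

end
end

section
/- Cyclicity of the vacuum for the Zamolodchikov creation operators: (a) for all ψ₁,…,ψₙ ∈ L²(ℝ, ℂ), the iterated symmetrization collapses: Pₙ(ψ₁ ⊗ P_{n−1}(ψ₂ ⊗ ⋯ ⊗ P₂(ψ_{n−1} ⊗ ψₙ)⋯)) = Pₙ(ψ₁ ⊗ ψ₂ ⊗ ⋯ ⊗ ψₙ); equivalently z†(ψ₁)⋯z†(ψₙ)Ω = √(n!)·Pₙ(ψ₁ ⊗ ⋯ ⊗ ψₙ); (b) the linear span of {Pₙ(ψ₁ ⊗ ⋯ ⊗ ψₙ) : ψ₁,…,ψₙ ∈ L²(ℝ, ℂ)} is dense in ℋₙ := {ψ ∈ L²(ℝⁿ) : Pₙψ = ψ}. -/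
/-!
Write `φ ⊗ ψ` for `θ ↦ φ(θ₀) ψ(θ₁, …, θₖ)`. The twist in `D(τᵢ)` only involves the two variables
it exchanges, so `D(τᵢ₊₁)(φ ⊗ ψ) = φ ⊗ D(τᵢ)ψ`. As the `τᵢ` generate `Sₖ`, every `π` has a `π'`
with `D(π')(φ ⊗ ψ) = φ ⊗ D(π)ψ`, and `P_{k+1} D(π') = P_{k+1}` then gives
`P_{k+1}(φ ⊗ Pₖψ) = P_{k+1}(φ ⊗ ψ)`. Part (a) follows by induction, the factors `√(k+1)`
multiplying up to `√(n!)`.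

For (b), the closed span of the product tensors contains the indicator of every box with factors
of finite measure; by Dynkin's π-λ theorem it then contains the indicator of every set of finite
measure, hence all of `L²(ℝⁿ)`. Applying the continuous map `Pₙ`, which fixes `ψ ∈ ℋₙ`, gives (b).
-/

open MeasureTheory Complex

noncomputable section

/-- Iterated application z†(ψ₁)⋯z†(ψₙ)Ω of creation operators to the vacuum Ω. -/
def applyChain (zc : ∀ k : ℕ, Lp ℂ 2 (volume : Measure ℝ) → Hsp k → Hsp (k + 1))
    (Ω : Hsp 0) : (l : List (Lp ℂ 2 (volume : Measure ℝ))) → Hsp l.length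
  | [] => Ω
  | φ :: rest => zc rest.length φ (applyChain zc Ω rest)

open Set Filter Topology
open scoped ENNReal symmDiff

section IndicatorMem

variable {α E : Type*} [MeasurableSpace α] {μ : Measure α} [NormedAddCommGroup E] {p : ℝ≥0∞}
  (M : AddSubgroup (Lp E p μ)) (c : E)

/-- Quantifying over the proofs of measurability and finiteness lets `s` be rewritten freely. -/
def IndicatorMem (s : Set α) : Prop :=
  ∀ (hs : MeasurableSet s) (hμs : μ s ≠ ∞), indicatorConstLp p hs hμs c ∈ M

variable {M c}

theorem indicatorMem_empty : IndicatorMem M c ∅ := fun _ _ => by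
  rw [indicatorConstLp_empty]
  exact M.zero_mem

theorem IndicatorMem.union {s t : Set α} (hs : MeasurableSet s) (ht : MeasurableSet t)
    (hst : Disjoint s t) (hMs : IndicatorMem M c s) (hMt : IndicatorMem M c t) :
    IndicatorMem M c (s ∪ t) := fun _ hμ => by
  have hμs : μ s ≠ ∞ := measure_ne_top_of_subset subset_union_left hμ
  have hμt : μ t ≠ ∞ := measure_ne_top_of_subset subset_union_right hμ
  rw [indicatorConstLp_disjoint_union hs ht hμs hμt hst]
  exact M.add_mem (hMs hs hμs) (hMt ht hμt)

theorem IndicatorMem.diff {s t : Set α} (ht : MeasurableSet t) (hts : t ⊆ s) (hμs : μ s ≠ ∞)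
    (hMs : IndicatorMem M c s) (hMt : IndicatorMem M c t) : IndicatorMem M c (s \ t) :=
  fun hst hμst => by
  have hμt : μ t ≠ ∞ := measure_ne_top_of_subset hts hμs
  have hs : MeasurableSet s := by simpa [union_sdiff_cancel hts] using ht.union hst
  have hsplit := indicatorConstLp_disjoint_union (p := p) (c := c) ht hst hμt hμst
    disjoint_sdiff_right
  simp only [union_sdiff_cancel hts] at hsplit
  have h := M.sub_mem (hMs hs hμs) (hMt ht hμt)
  rwa [hsplit, add_sub_cancel_left] at h

theorem IndicatorMem.iUnion_of_monotone [Fact (1 ≤ p)] (hp : p ≠ ∞)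
    (hM : IsClosed (M : Set (Lp E p μ))) {t : ℕ → Set α} (ht : ∀ n, MeasurableSet (t n))
    (hmono : Monotone t) (hMt : ∀ n, IndicatorMem M c (t n)) :
    IndicatorMem M c (⋃ n, t n) := fun hT hμT => by
  have hμt : ∀ n, μ (t n) ≠ ∞ := fun n => measure_ne_top_of_subset (subset_iUnion t n) hμT
  have hgap : Tendsto (fun n => μ (t n ∆ ⋃ n, t n)) atTop (𝓝 0) := by
    simp_rw [symmDiff_of_le (subset_iUnion t _)]
    have := tendsto_measure_iInter_atTop (μ := μ) (fun n => (hT.diff (ht n)).nullMeasurableSet)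
      (fun m n hmn => sdiff_subset_sdiff_right (hmono hmn))
      ⟨0, measure_ne_top_of_subset sdiff_subset hμT⟩
    rwa [← sdiff_iUnion, sdiff_self, measure_empty] at this
  exact hM.mem_of_tendsto (tendsto_indicatorConstLp_set hp hgap)
    (Eventually.of_forall fun n => hMt n (ht n) (hμt n))

variable {C : Set (Set α)}

/-- Intersecting with `B` keeps every set of finite measure, which the complement step needs. -/
theorem IndicatorMem.inter_of_isPiSystem [Fact (1 ≤ p)] (hp : p ≠ ∞)
    (hM : IsClosed (M : Set (Lp E p μ)))
    (h_gen : ‹MeasurableSpace α› = MeasurableSpace.generateFrom C) (hC : IsPiSystem C)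
    {B : Set α} (hBC : B ∈ C) (hμB : μ B ≠ ∞) (hCM : ∀ t ∈ C, IndicatorMem M c (t ∩ B))
    {s : Set α} (hs : MeasurableSet s) : IndicatorMem M c (s ∩ B) := by
  have hB : MeasurableSet B := h_gen ▸ MeasurableSpace.measurableSet_generateFrom hBC
  refine MeasurableSpace.induction_on_inter (C := fun t _ => IndicatorMem M c (t ∩ B)) h_gen hC
    (by simpa using indicatorMem_empty) hCM (fun t ht hMt => ?_)
    (fun f hdisj hf hMf => ?_) s hs
  · rw [← sdiff_eq_compl_inter, ← sdiff_inter_self_eq_sdiff]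
    exact (inter_self B ▸ hCM B hBC).diff (ht.inter hB) inter_subset_right hμB hMt
  · set g : ℕ → Set α := fun i => f i ∩ B
    have hg : ∀ i, MeasurableSet (g i) := fun i => (hf i).inter hB
    have hgdisj : Pairwise (Function.onFun Disjoint g) :=
      fun i j hij => (hdisj hij).mono inter_subset_left inter_subset_left
    have hacc_meas : ∀ n, MeasurableSet (accumulate g n) :=
      fun n => MeasurableSet.biUnion (to_countable _) fun i _ => hg i
    have hacc : ∀ n, IndicatorMem M c (accumulate g n) := by
      intro n
      induction n with
      | zero => simpa using hMf 0
      | succ n ih =>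
        rw [accumulate_succ]
        exact ih.union (hacc_meas n) (hg (n + 1)) (disjoint_accumulate hgdisj n.lt_succ_self)
          (hMf (n + 1))
    rw [iUnion_inter, ← iUnion_accumulate]
    exact IndicatorMem.iUnion_of_monotone hp hM hacc_meas monotone_accumulate hacc

theorem IndicatorMem.of_isPiSystem [Fact (1 ≤ p)] (hp : p ≠ ∞)
    (hM : IsClosed (M : Set (Lp E p μ)))
    (h_gen : ‹MeasurableSpace α› = MeasurableSpace.generateFrom C) (hC : IsPiSystem C)
    {B : ℕ → Set α} (hBC : ∀ n, B n ∈ C) (hμB : ∀ n, μ (B n) ≠ ∞) (hBmono : Monotone B)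
    (hBspan : ⋃ n, B n = univ) (hCM : ∀ t ∈ C, ∀ n, IndicatorMem M c (t ∩ B n))
    {s : Set α} (hs : MeasurableSet s) : IndicatorMem M c s := by
  have hB : ∀ n, MeasurableSet (B n) :=
    fun n => h_gen ▸ MeasurableSpace.measurableSet_generateFrom (hBC n)
  rw [← inter_univ s, ← hBspan, inter_iUnion]
  exact IndicatorMem.iUnion_of_monotone hp hM (fun n => hs.inter (hB n))
    (fun m n hmn => inter_subset_inter_right s (hBmono hmn))
    (fun n => IndicatorMem.inter_of_isPiSystem hp hM h_gen hC (hBC n) (hμB n)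
      (fun t ht => hCM t ht n) hs)

theorem AddSubgroup.mem_of_forall_indicatorMem [Fact (1 ≤ p)] (hp : p ≠ ∞)
    (hM : IsClosed (M : Set (Lp E p μ)))
    (hind : ∀ (c : E) (s : Set α), MeasurableSet s → IndicatorMem M c s) (f : Lp E p μ) :
    f ∈ M := by
  refine Lp.induction hp (· ∈ M) (fun c s hs hμs => ?_)
    (fun _ _ _ _ _ hf hg => M.add_mem hf hg) hM f
  rw [Lp.simpleFunc.coe_indicatorConst]
  exact hind c s hs hs hμs.ne

end IndicatorMem

theorem indicatorConstLp_smul {α 𝕜 E : Type*} [MeasurableSpace α] {μ : Measure α}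
    [NormedField 𝕜] [NormedAddCommGroup E] [NormedSpace 𝕜 E] {p : ℝ≥0∞} {s : Set α}
    (hs : MeasurableSet s) (hμs : μ s ≠ ∞) (a : 𝕜) (x : E) :
    indicatorConstLp p hs hμs (a • x) = a • indicatorConstLp p hs hμs x := by
  rw [indicatorConstLp, indicatorConstLp, ← MemLp.toLp_const_smul]
  congr 1
  ext y
  by_cases hy : y ∈ s <;> simp [hy]

section Coordinates

theorem measurePreserving_comp_perm {n : ℕ} (σ : Equiv.Perm (Fin n)) :
    MeasurePreserving (fun θ : Fin n → ℝ => fun m => θ (σ m)) volume volume := by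
  convert volume_measurePreserving_piCongrLeft (fun _ : Fin n => ℝ) σ.symm using 1
  ext θ m
  simp [MeasurableEquiv.coe_piCongrLeft, Equiv.piCongrLeft_apply]

theorem piFinSuccAbove_zero_apply {k : ℕ} (θ : Fin (k + 1) → ℝ) :
    MeasurableEquiv.piFinSuccAbove (fun _ => ℝ) 0 θ = (θ 0, Fin.tail θ) := by
  refine Prod.ext rfl (funext fun j => ?_)
  simp [MeasurableEquiv.piFinSuccAbove, Fin.tail]

theorem quasiMeasurePreserving_tail (k : ℕ) :
    Measure.QuasiMeasurePreserving (Fin.tail : (Fin (k + 1) → ℝ) → Fin k → ℝ) volume volume := by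
  have h : (Fin.tail : (Fin (k + 1) → ℝ) → Fin k → ℝ)
      = Prod.snd ∘ MeasurableEquiv.piFinSuccAbove (fun _ => ℝ) 0 := by
    funext θ
    rw [Function.comp_apply, piFinSuccAbove_zero_apply]
  rw [h]
  exact Measure.quasiMeasurePreserving_snd.comp
    (volume_preserving_piFinSuccAbove _ 0).quasiMeasurePreserving

theorem memLp_two_mul_prod {α β : Type*} [MeasurableSpace α] [MeasurableSpace β] {μ : Measure α}
    {ν : Measure β} [SFinite ν] {f : α → ℂ} {g : β → ℂ} (hf : MemLp f 2 μ) (hg : MemLp g 2 ν) :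
    MemLp (fun z : α × β => f z.1 * g z.2) 2 (μ.prod ν) := by
  have hmeas : AEStronglyMeasurable (fun z : α × β => f z.1 * g z.2) (μ.prod ν) :=
    (hf.aestronglyMeasurable.comp_quasiMeasurePreserving Measure.quasiMeasurePreserving_fst).mul
      (hg.aestronglyMeasurable.comp_quasiMeasurePreserving Measure.quasiMeasurePreserving_snd)
  rw [memLp_two_iff_integrable_sq_norm hmeas]
  refine (((memLp_two_iff_integrable_sq_norm hf.1).mp hf).mul_prod
    ((memLp_two_iff_integrable_sq_norm hg.1).mp hg)).congr (.of_forall fun z => ?_)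
  simp [mul_pow]

theorem memLp_two_mul_tail {k : ℕ} {f : ℝ → ℂ} {g : (Fin k → ℝ) → ℂ} (hf : MemLp f 2 volume)
    (hg : MemLp g 2 volume) :
    MemLp (fun θ : Fin (k + 1) → ℝ => f (θ 0) * g (Fin.tail θ)) 2 volume := by
  have h := (memLp_two_mul_prod hf hg).comp_measurePreserving
    (volume_preserving_piFinSuccAbove (fun _ : Fin (k + 1) => ℝ) 0)
  simpa only [Function.comp_def, piFinSuccAbove_zero_apply] using h

end Coordinates

section Tensors

variable {k : ℕ}

def tensorCons (φ : Lp ℂ 2 (volume : Measure ℝ)) : Hsp k →ₗ[ℂ] Hsp (k + 1) where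
  toFun ψ := (memLp_two_mul_tail (Lp.memLp φ) (Lp.memLp ψ)).toLp
    (fun θ => φ (θ 0) * ψ (Fin.tail θ))
  map_add' ψ χ := by
    rw [← MemLp.toLp_add]
    refine MemLp.toLp_congr _ _ ?_
    filter_upwards [(quasiMeasurePreserving_tail k).ae_eq_comp (Lp.coeFn_add ψ χ)] with θ hθ
    simp only [Function.comp_apply] at hθ
    simp only [hθ, Pi.add_apply]
    ring
  map_smul' a ψ := by
    rw [RingHom.id_apply, ← MemLp.toLp_const_smul]
    refine MemLp.toLp_congr _ _ ?_
    filter_upwards [(quasiMeasurePreserving_tail k).ae_eq_comp (Lp.coeFn_smul a ψ)] with θ hθ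
    simp only [Function.comp_apply] at hθ
    simp only [hθ, Pi.smul_apply, smul_eq_mul]
    ring

theorem coeFn_tensorCons (φ : Lp ℂ 2 (volume : Measure ℝ)) (ψ : Hsp k) :
    tensorCons φ ψ =ᵐ[volume] fun θ => φ (θ 0) * ψ (Fin.tail θ) :=
  MemLp.coeFn_toLp (memLp_two_mul_tail (Lp.memLp φ) (Lp.memLp ψ))

theorem memLp_prodTensor : ∀ {k : ℕ} (ψs : Fin k → Lp ℂ 2 (volume : Measure ℝ)),
    MemLp (fun θ : Fin k → ℝ => ∏ j, ψs j (θ j)) 2 volume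
  | 0, _ => by
    have : IsFiniteMeasure (volume : Measure (Fin 0 → ℝ)) := by
      rw [volume_pi, Measure.pi_of_empty]
      infer_instance
    simp
  | _ + 1, ψs => by
    simp only [Fin.prod_univ_succ]
    exact memLp_two_mul_tail (Lp.memLp (ψs 0)) (memLp_prodTensor fun j => ψs j.succ)

def prodTensor (ψs : Fin k → Lp ℂ 2 (volume : Measure ℝ)) : Hsp k :=
  (memLp_prodTensor ψs).toLp _

theorem coeFn_prodTensor (ψs : Fin k → Lp ℂ 2 (volume : Measure ℝ)) :
    prodTensor ψs =ᵐ[volume] fun θ => ∏ j, ψs j (θ j) :=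
  MemLp.coeFn_toLp (memLp_prodTensor ψs)

theorem tensorCons_prodTensor (φ : Lp ℂ 2 (volume : Measure ℝ))
    (ψs : Fin k → Lp ℂ 2 (volume : Measure ℝ)) :
    tensorCons φ (prodTensor ψs) = prodTensor (Fin.cons φ ψs) := by
  refine Lp.ext ?_
  filter_upwards [coeFn_tensorCons φ (prodTensor ψs),
    coeFn_prodTensor (Fin.cons φ ψs),
    (quasiMeasurePreserving_tail k).ae_eq_comp (coeFn_prodTensor ψs)]
    with θ hcons hprod htail
  simp only [Function.comp_apply] at htail
  rw [hcons, hprod, htail, Fin.prod_univ_succ]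
  rfl

theorem prodTensor_indicatorConstLp {t : Fin k → Set ℝ} (ht : ∀ j, MeasurableSet (t j))
    (hμt : ∀ j, volume (t j) ≠ ∞) (hμ : volume (univ.pi t) ≠ ∞) :
    prodTensor (fun j => indicatorConstLp 2 (ht j) (hμt j) (1 : ℂ))
      = indicatorConstLp 2 (MeasurableSet.univ_pi ht) hμ 1 := by
  have hfactor : ∀ j, (fun θ : Fin k → ℝ => indicatorConstLp 2 (ht j) (hμt j) (1 : ℂ) (θ j))
      =ᵐ[volume] fun θ => (t j).indicator 1 (θ j) :=
    fun j => (Measure.quasiMeasurePreserving_eval _ j).ae_eq_comp indicatorConstLp_coeFn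
  refine Lp.ext ?_
  filter_upwards [coeFn_prodTensor _,
    indicatorConstLp_coeFn (μ := volume) (hs := MeasurableSet.univ_pi ht) (hμs := hμ)
      (c := (1 : ℂ)),
    ae_all_iff.mpr hfactor] with θ hprod hind hfac
  rw [hprod, hind, Finset.prod_congr rfl fun j _ => hfac j]
  have hbox := indicator_pi_one_apply (M₀ := ℂ) Finset.univ t θ
  rw [Finset.coe_univ] at hbox
  exact hbox.symm

end Tensors

section Symmetrizer

variable {n : ℕ} (D : Equiv.Perm (Fin n) →* unitary (Hsp n →L[ℂ] Hsp n))

theorem D_mul_apply (π σ : Equiv.Perm (Fin n)) (ψ : Hsp n) :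
    (D (π * σ) : Hsp n →L[ℂ] Hsp n) ψ
      = (D π : Hsp n →L[ℂ] Hsp n) ((D σ : Hsp n →L[ℂ] Hsp n) ψ) := by
  rw [map_mul]
  rfl

theorem symProj_apply (ψ : Hsp n) :
    symProj D ψ = (n.factorial : ℂ)⁻¹ • ∑ π, (D π : Hsp n →L[ℂ] Hsp n) ψ := by
  simp [symProj]

theorem factorial_inv_smul_sum_const {V : Type*} [AddCommGroup V] [Module ℂ V] (x : V) :
    (n.factorial : ℂ)⁻¹ • ∑ _π : Equiv.Perm (Fin n), x = x := by
  rw [Finset.sum_const, Finset.card_univ, Fintype.card_perm, Fintype.card_fin,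
    ← Nat.cast_smul_eq_nsmul ℂ, smul_smul,
    inv_mul_cancel₀ (by exact_mod_cast n.factorial_ne_zero), one_smul]

theorem symProj_apply_of_forall {ψ : Hsp n} (h : ∀ π, (D π : Hsp n →L[ℂ] Hsp n) ψ = ψ) :
    symProj D ψ = ψ := by
  simp only [symProj_apply, h, factorial_inv_smul_sum_const]

theorem symProj_D_apply (π : Equiv.Perm (Fin n)) (ψ : Hsp n) :
    symProj D ((D π : Hsp n →L[ℂ] Hsp n) ψ) = symProj D ψ := by
  simp only [symProj_apply, ← D_mul_apply]
  congr 1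
  exact Equiv.sum_comp (Equiv.mulRight π) (fun σ => (D σ : Hsp n →L[ℂ] Hsp n) ψ)

end Symmetrizer

section Intertwining

variable {S₂ : ℝ → ℂ} {k : ℕ} {Dk : Equiv.Perm (Fin k) →* unitary (Hsp k →L[ℂ] Hsp k)}
  {Dk1 : Equiv.Perm (Fin (k + 1)) →* unitary (Hsp (k + 1) →L[ℂ] Hsp (k + 1))}

theorem tau_succ_apply_zero {i : ℕ} (hi : i + 1 < k) :
    tau (k + 1) (i + 1) (Nat.succ_lt_succ hi) 0 = 0 := by
  simp only [tau, Equiv.swap_apply_def]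
  split_ifs <;> simp_all [Fin.ext_iff]

theorem tau_succ_apply_succ {i : ℕ} (hi : i + 1 < k) (j : Fin k) :
    tau (k + 1) (i + 1) (Nat.succ_lt_succ hi) j.succ = (tau k i hi j).succ := by
  simp only [tau, Equiv.swap_apply_def]
  split_ifs <;> simp_all [Fin.ext_iff]

theorem D_tau_succ_tensorCons (hDk : IsZamoRep S₂ k Dk) (hDk1 : IsZamoRep S₂ (k + 1) Dk1)
    {i : ℕ} (hi : i + 1 < k) (φ : Lp ℂ 2 (volume : Measure ℝ)) (ψ : Hsp k) :
    (Dk1 (tau (k + 1) (i + 1) (Nat.succ_lt_succ hi)) : Hsp (k + 1) →L[ℂ] Hsp (k + 1))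
        (tensorCons φ ψ)
      = tensorCons φ ((Dk (tau k i hi) : Hsp k →L[ℂ] Hsp k) ψ) := by
  set τ := tau k i hi
  set τ' := tau (k + 1) (i + 1) (Nat.succ_lt_succ hi)
  refine Lp.ext ?_
  filter_upwards [hDk1 (i + 1) (Nat.succ_lt_succ hi) (tensorCons φ ψ),
    (measurePreserving_comp_perm τ').quasiMeasurePreserving.ae_eq_comp (coeFn_tensorCons φ ψ),
    (quasiMeasurePreserving_tail k).ae_eq_comp (hDk i hi ψ),
    coeFn_tensorCons φ ((Dk τ : Hsp k →L[ℂ] Hsp k) ψ)] with θ hD1 hperm hD hcons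
  simp only [Function.comp_apply] at hperm hD
  have htail : Fin.tail (fun m => θ (τ' m)) = fun m => Fin.tail θ (τ m) :=
    funext fun j => congrArg θ (tau_succ_apply_succ hi j)
  rw [hD1, hcons, hD, hperm, tau_succ_apply_zero hi, htail]
  exact mul_left_comm _ _ _

theorem exists_D_tensorCons (hDk : IsZamoRep S₂ k Dk) (hDk1 : IsZamoRep S₂ (k + 1) Dk1)
    (π : Equiv.Perm (Fin k)) :
    ∃ π' : Equiv.Perm (Fin (k + 1)), ∀ (φ : Lp ℂ 2 (volume : Measure ℝ)) (ψ : Hsp k),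
      (Dk1 π' : Hsp (k + 1) →L[ℂ] Hsp (k + 1)) (tensorCons φ ψ)
        = tensorCons φ ((Dk π : Hsp k →L[ℂ] Hsp k) ψ) := by
  rcases k with _ | m
  · refine ⟨1, fun φ ψ => ?_⟩
    rw [Subsingleton.elim π 1, map_one, map_one]
    rfl
  have hπ : π ∈ Submonoid.closure (range fun i : Fin m => Equiv.swap i.castSucc i.succ) := by
    rw [Equiv.Perm.mclosure_swap_castSucc_succ m]
    trivial
  induction hπ using Submonoid.closure_induction with
  | mem σ hσ =>
    obtain ⟨i, rfl⟩ := hσ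
    have hi : (i : ℕ) + 1 < m + 1 := Nat.succ_lt_succ i.isLt
    have hswap : Equiv.swap i.castSucc i.succ = tau (m + 1) i hi := rfl
    exact ⟨_, hswap ▸ D_tau_succ_tensorCons hDk hDk1 hi⟩
  | one =>
    refine ⟨1, fun φ ψ => ?_⟩
    rw [map_one, map_one]
    rfl
  | mul σ₁ σ₂ _ _ ih₁ ih₂ =>
    obtain ⟨π₁, hπ₁⟩ := ih₁
    obtain ⟨π₂, hπ₂⟩ := ih₂
    exact ⟨π₁ * π₂, fun φ ψ => by rw [D_mul_apply, hπ₂, hπ₁, ← D_mul_apply]⟩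

theorem symProj_tensorCons_symProj (hDk : IsZamoRep S₂ k Dk) (hDk1 : IsZamoRep S₂ (k + 1) Dk1)
    (φ : Lp ℂ 2 (volume : Measure ℝ)) (ψ : Hsp k) :
    symProj Dk1 (tensorCons φ (symProj Dk ψ)) = symProj Dk1 (tensorCons φ ψ) := by
  have hterm : ∀ π, symProj Dk1 (tensorCons φ ((Dk π : Hsp k →L[ℂ] Hsp k) ψ))
      = symProj Dk1 (tensorCons φ ψ) := fun π => by
    obtain ⟨π', hπ'⟩ := exists_D_tensorCons hDk hDk1 π
    rw [← hπ', symProj_D_apply]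
  rw [symProj_apply Dk ψ, map_smul, map_sum, map_smul, map_sum]
  simp only [hterm, factorial_inv_smul_sum_const]

end Intertwining

theorem List.get_cons_eq_finCons {β : Type*} (b : β) (l : List β) :
    (fun j => (b :: l).get j) = Fin.cons b fun j => l.get j := by
  funext j
  cases j using Fin.cases <;> rfl

theorem applyChain_eq {S₂ : ℝ → ℂ}
    (D : ∀ k : ℕ, Equiv.Perm (Fin k) →* unitary (Hsp k →L[ℂ] Hsp k))
    (hD : ∀ k : ℕ, IsZamoRep S₂ k (D k))
    (zc : ∀ k : ℕ, Lp ℂ 2 (volume : Measure ℝ) → Hsp k → Hsp (k + 1))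
    (hzc : ∀ (k : ℕ) (φ : Lp ℂ 2 (volume : Measure ℝ)) (χ : Hsp k),
      ∃ h : MemLp (fun θ : Fin (k + 1) → ℝ => φ (θ 0) * χ (Fin.tail θ)) 2
          (volume : Measure (Fin (k + 1) → ℝ)),
        zc k φ χ = (Real.sqrt (k + 1) : ℂ) • symProj (D (k + 1)) (h.toLp _))
    (Ω : Hsp 0) (hΩ : ∀ᵐ θ ∂(volume : Measure (Fin 0 → ℝ)), Ω θ = 1)
    (l : List (Lp ℂ 2 (volume : Measure ℝ))) :
    applyChain zc Ω l
      = (Real.sqrt l.length.factorial : ℂ)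
          • symProj (D l.length) (prodTensor fun j => l.get j) := by
  induction l with
  | nil =>
    change Ω = (Real.sqrt (Nat.factorial 0) : ℂ) • symProj (D 0) (prodTensor (k := 0) _)
    rw [symProj_apply_of_forall _ fun π => by rw [Subsingleton.elim π 1, map_one]; rfl]
    simp only [Nat.factorial_zero, Nat.cast_one, Real.sqrt_one, Complex.ofReal_one, one_smul]
    refine Lp.ext ?_
    filter_upwards [hΩ, coeFn_prodTensor (k := 0) fun j => ([] : List _).get j]
      with θ hΩθ hprod
    rw [hΩθ]
    exact (hprod.trans (Fin.prod_univ_zero _)).symm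
  | cons φ rest ih =>
    obtain ⟨_, hz⟩ := hzc rest.length φ (applyChain zc Ω rest)
    change zc rest.length φ (applyChain zc Ω rest) = _
    rw [hz]
    change _ • symProj _ (tensorCons φ (applyChain zc Ω rest)) = _
    rw [ih, map_smul, map_smul, symProj_tensorCons_symProj (hD _) (hD _), tensorCons_prodTensor,
      ← List.get_cons_eq_finCons, smul_smul, ← Complex.ofReal_mul, ← Real.sqrt_mul (by positivity)]
    congr 4
    push_cast [List.length_cons, Nat.factorial_succ]
    ring

section Density

variable {k : ℕ}

theorem indicatorMem_univ_pi {M : Submodule ℂ (Hsp k)}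
    (hM : Submodule.span ℂ (range prodTensor) ≤ M) (c : ℂ) {t : Fin k → Set ℝ}
    (ht : ∀ j, MeasurableSet (t j)) (hμt : ∀ j, volume (t j) ≠ ∞) :
    IndicatorMem M.toAddSubgroup c (univ.pi t) := fun _ hμ => by
  have h := indicatorConstLp_smul (p := 2) (MeasurableSet.univ_pi ht) hμ c (1 : ℂ)
  rw [smul_eq_mul, mul_one] at h
  rw [h, ← prodTensor_indicatorConstLp ht hμt]
  exact M.smul_mem c (hM (Submodule.subset_span ⟨_, rfl⟩))

theorem mem_closure_span_prodTensor (ψ : Hsp k) :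
    ψ ∈ (Submodule.span ℂ (range (prodTensor (k := k)))).topologicalClosure := by
  set S := Submodule.span ℂ (range (prodTensor (k := k)))
  have hclosed : IsClosed (S.topologicalClosure : Set (Hsp k)) := S.isClosed_topologicalClosure
  set B : ℕ → Set (Fin k → ℝ) := fun n => univ.pi fun _ => spanningSets volume n
  have hBC : ∀ n, B n ∈ pi univ '' pi univ fun _ : Fin k => {s : Set ℝ | MeasurableSet s} :=
    fun n => mem_image_of_mem _ fun _ _ => by
      exact measurableSet_spanningSets (volume : Measure ℝ) n
  have hBspan : ⋃ n, B n = univ := by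
    rw [iUnion_univ_pi_of_monotone fun _ => monotone_spanningSets volume]
    simp [iUnion_spanningSets]
  refine AddSubgroup.mem_of_forall_indicatorMem (M := S.topologicalClosure.toAddSubgroup)
    ENNReal.ofNat_ne_top hclosed (fun c s hs => ?_) ψ
  refine IndicatorMem.of_isPiSystem ENNReal.ofNat_ne_top hclosed
    generateFrom_pi.symm isPiSystem_pi hBC ?_ (fun m n hmn => pi_mono fun _ _ =>
      monotone_spanningSets volume hmn) hBspan ?_ hs
  · intro n
    rw [volume_pi_pi]
    exact ENNReal.prod_ne_top fun _ _ => (measure_spanningSets_lt_top volume n).ne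
  · rintro _ ⟨t, ht, rfl⟩ n
    rw [← pi_inter_distrib]
    have htj : ∀ j, MeasurableSet (t j) := fun j => ht j trivial
    exact indicatorMem_univ_pi S.le_topologicalClosure c
      (fun j => (htj j).inter (measurableSet_spanningSets volume n))
      fun j => measure_ne_top_of_subset inter_subset_right (measure_spanningSets_lt_top volume n).ne

end Density

theorem mem_closure_span_symProj_prodTensor {k : ℕ}
    (D : Equiv.Perm (Fin k) →* unitary (Hsp k →L[ℂ] Hsp k)) {ψ : Hsp k}
    (hψ : symProj D ψ = ψ) :
    ψ ∈ closure (Submodule.span ℂ (range fun ψs => symProj D (prodTensor ψs)) : Set (Hsp k)) := by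
  have hmap : (Submodule.span ℂ (range (prodTensor (k := k)))).map (symProj D : Hsp k →ₗ[ℂ] Hsp k)
      = Submodule.span ℂ (range fun ψs => symProj D (prodTensor ψs)) := by
    rw [Submodule.map_span, ← range_comp]
    rfl
  have hψ_mem := mem_closure_span_prodTensor ψ
  rw [← SetLike.mem_coe, Submodule.topologicalClosure_coe] at hψ_mem
  rw [← hψ]
  exact map_mem_closure (symProj D).continuous hψ_mem fun y hy =>
    hmap ▸ Submodule.mem_map_of_mem hy

theorem statement11_general (S₂ : ℝ → ℂ)
    (D : ∀ k : ℕ, Equiv.Perm (Fin k) →* unitary (Hsp k →L[ℂ] Hsp k))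
    (hD : ∀ k : ℕ, IsZamoRep S₂ k (D k))
    -- the creation operators z†(φ) : ℋₖ → ℋ_{k+1}
    (zc : ∀ k : ℕ, Lp ℂ 2 (volume : Measure ℝ) → Hsp k → Hsp (k + 1))
    (hzc : ∀ (k : ℕ) (φ : Lp ℂ 2 (volume : Measure ℝ)) (χ : Hsp k),
      ∃ h : MemLp (fun θ : Fin (k + 1) → ℝ => φ (θ 0) * χ (Fin.tail θ)) 2
          (volume : Measure (Fin (k + 1) → ℝ)),
        zc k φ χ = (Real.sqrt (k + 1) : ℂ) • symProj (D (k + 1)) (h.toLp _))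
    -- the vacuum vector Ω
    (Ω : Hsp 0) (hΩ : ∀ᵐ θ ∂(volume : Measure (Fin 0 → ℝ)), Ω θ = 1) :
    (∀ l : List (Lp ℂ 2 (volume : Measure ℝ)),
      ∃ h : MemLp (fun θ : Fin l.length → ℝ => ∏ j : Fin l.length, (l.get j) (θ j)) 2
          (volume : Measure (Fin l.length → ℝ)),
        applyChain zc Ω l
          = (Real.sqrt (l.length.factorial) : ℂ) • symProj (D l.length) (h.toLp _)) ∧
    (∀ (k : ℕ) (ψ : Hsp k), symProj (D k) ψ = ψ →
      ψ ∈ closure (Submodule.span ℂ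
        {x : Hsp k | ∃ (ψs : Fin k → Lp ℂ 2 (volume : Measure ℝ))
          (h : MemLp (fun θ : Fin k → ℝ => ∏ j : Fin k, (ψs j) (θ j)) 2
            (volume : Measure (Fin k → ℝ))),
          x = symProj (D k) (h.toLp _)} : Set (Hsp k))) := by
  refine ⟨fun l => ⟨memLp_prodTensor _, applyChain_eq D hD zc hzc Ω hΩ l⟩, fun k ψ hψ => ?_⟩
  convert mem_closure_span_symProj_prodTensor (D k) hψ using 4
  ext x
  constructor
  · rintro ⟨ψs, _, rfl⟩
    exact ⟨ψs, rfl⟩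
  · rintro ⟨ψs, rfl⟩
    exact ⟨ψs, memLp_prodTensor ψs, rfl⟩

/-- Cyclicity of the vacuum for the creation operators:
(a) z†(ψ₁)⋯z†(ψₙ)Ω = √(n!)·Pₙ(ψ₁ ⊗ ⋯ ⊗ ψₙ) (the iterated symmetrizations collapse);
(b) the span of the vectors Pₙ(ψ₁ ⊗ ⋯ ⊗ ψₙ) is dense in ℋₙ = {ψ : Pₙψ = ψ}. -/
theorem statement11 (S₂ : ℝ → ℂ) (hS₂meas : Measurable S₂)
    (hS₂abs : ∀ θ : ℝ, ‖S₂ θ‖ = 1)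
    (hS₂sym : ∀ θ : ℝ, S₂ (-θ) = starRingEnd ℂ (S₂ θ))
    (D : ∀ k : ℕ, Equiv.Perm (Fin k) →* unitary (Hsp k →L[ℂ] Hsp k))
    (hD : ∀ k : ℕ, IsZamoRep S₂ k (D k))
    -- the creation operators z†(φ) : ℋₖ → ℋ_{k+1}
    (zc : ∀ k : ℕ, Lp ℂ 2 (volume : Measure ℝ) → Hsp k → Hsp (k + 1))
    (hzc : ∀ (k : ℕ) (φ : Lp ℂ 2 (volume : Measure ℝ)) (χ : Hsp k),
      ∃ h : MemLp (fun θ : Fin (k + 1) → ℝ => φ (θ 0) * χ (Fin.tail θ)) 2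
          (volume : Measure (Fin (k + 1) → ℝ)),
        zc k φ χ = (Real.sqrt (k + 1) : ℂ) • symProj (D (k + 1)) (h.toLp _))
    -- the vacuum vector Ω
    (Ω : Hsp 0) (hΩ : ∀ᵐ θ ∂(volume : Measure (Fin 0 → ℝ)), Ω θ = 1) :
    (∀ l : List (Lp ℂ 2 (volume : Measure ℝ)),
      ∃ h : MemLp (fun θ : Fin l.length → ℝ => ∏ j : Fin l.length, (l.get j) (θ j)) 2
          (volume : Measure (Fin l.length → ℝ)),
        applyChain zc Ω l
          = (Real.sqrt (l.length.factorial) : ℂ) • symProj (D l.length) (h.toLp _)) ∧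
    (∀ (k : ℕ) (ψ : Hsp k), symProj (D k) ψ = ψ →
      ψ ∈ closure (Submodule.span ℂ
        {x : Hsp k | ∃ (ψs : Fin k → Lp ℂ 2 (volume : Measure ℝ))
          (h : MemLp (fun θ : Fin k → ℝ => ∏ j : Fin k, (ψs j) (θ j)) 2
            (volume : Measure (Fin k → ℝ))),
          x = symProj (D k) (h.toLp _)} : Set (Hsp k))) :=
  statement11_general S₂ D hD zc hzc Ω hΩ

end
end
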